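/- Let D = {(z₁,z₂) ∈ ℂ² : 0 < |z₂| < |z₁| < 1} be the Hartogs triangle. Let a > 0 be a fixed constant and let z^j = (z₁^j, z₂^j) be a sequence of points in D satisfying |z₁^j| ≤ (1 + 1/j)|z₂^j| and |z₂^j| > a for all j. Then s_D(z^j) ≥ (√2/2)·a for all j. -/

import Mathlib

/-!
The map `w ↦ (w₁, w₂ / w₁)` is a biholomorphism of the Hartogs triangle `D` onto the punctured
bidisc `Δ* × Δ*` (coordinates are indexed from `0` in the code). Following it by the disc
automorphisms sending `z₁` and `z₂ / z₁` to `0`, and scaling by `1 / √2` to fit the bidisc into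
the ball, gives an injective holomorphic map `D → B²` with `z ↦ 0`. Its image is
`((Δ ∖ {p}) × (Δ ∖ {q})) / √2` with `|p| = |z₁|` and `|q| = |z₂ / z₁|`, both larger than `|z₂|`,
so it contains the ball of radius `|z₂| / √2`. Hence `s_D(z) ≥ (√2 / 2)|z₂|`.
-/

open Metric Set Filter Topology

noncomputable section

/-- The squeezing function of a domain `D` in complex Euclidean space: at `z ∈ D` it is the
supremum of radii `r > 0` such that some injective holomorphic map `f : D → Bⁿ` with `f z = 0`
satisfies `ball 0 r ⊆ f(D)`. -/
def squeezingFn {ι : Type*} [Fintype ι] (D : Set (EuclideanSpace ℂ ι))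
    (z : EuclideanSpace ℂ ι) : ℝ :=
  sSup { r : ℝ | 0 < r ∧ ∃ f : EuclideanSpace ℂ ι → EuclideanSpace ℂ ι,
    DifferentiableOn ℂ f D ∧ InjOn f D ∧ MapsTo f D (ball 0 1) ∧ f z = 0 ∧
    ball (0 : EuclideanSpace ℂ ι) r ⊆ f '' D }

/-- The Hartogs triangle `D = {(z₁, z₂) ∈ ℂ² : 0 < |z₂| < |z₁| < 1}`. -/
def hartogsTriangle : Set (EuclideanSpace ℂ (Fin 2)) :=
  { z | 0 < ‖z 1‖ ∧ ‖z 1‖ < ‖z 0‖ ∧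
        ‖z 0‖ < 1 }

open ComplexConjugate

def diskMobius (c w : ℂ) : ℂ := (w - c) / (1 - conj c * w)

@[simp]
lemma diskMobius_self (c : ℂ) : diskMobius c c = 0 := by
  simp [diskMobius]

lemma sq_norm_one_sub_conj_mul (c w : ℂ) :
    ‖1 - conj c * w‖ ^ 2 = ‖w - c‖ ^ 2 + (1 - ‖c‖ ^ 2) * (1 - ‖w‖ ^ 2) := by
  simp only [Complex.sq_norm, Complex.normSq_apply, Complex.sub_re, Complex.sub_im,
    Complex.mul_re, Complex.mul_im, Complex.one_re, Complex.one_im, Complex.conj_re,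
    Complex.conj_im]
  ring

section diskMobius

variable {c w : ℂ}

lemma norm_sub_lt_norm_one_sub_conj_mul (hc : ‖c‖ < 1) (hw : ‖w‖ < 1) :
    ‖w - c‖ < ‖1 - conj c * w‖ := by
  have hpos : 0 < (1 - ‖c‖ ^ 2) * (1 - ‖w‖ ^ 2) := by
    apply mul_pos <;> nlinarith [norm_nonneg c, norm_nonneg w]
  have := sq_norm_one_sub_conj_mul c w
  exact (pow_lt_pow_iff_left₀ (norm_nonneg _) (norm_nonneg _) two_ne_zero).mp (by linarith)

lemma one_sub_conj_mul_ne_zero (hc : ‖c‖ < 1) (hw : ‖w‖ < 1) : 1 - conj c * w ≠ 0 :=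
  norm_pos_iff.mp ((norm_nonneg _).trans_lt (norm_sub_lt_norm_one_sub_conj_mul hc hw))

lemma norm_diskMobius_lt_one (hc : ‖c‖ < 1) (hw : ‖w‖ < 1) : ‖diskMobius c w‖ < 1 := by
  rw [diskMobius, norm_div, div_lt_one (norm_pos_iff.mpr (one_sub_conj_mul_ne_zero hc hw))]
  exact norm_sub_lt_norm_one_sub_conj_mul hc hw

lemma diskMobius_eq_zero_iff (hc : ‖c‖ < 1) (hw : ‖w‖ < 1) : diskMobius c w = 0 ↔ w = c := by
  simp [diskMobius, sub_eq_zero, one_sub_conj_mul_ne_zero hc hw]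

lemma diskMobius_neg_diskMobius (hc : ‖c‖ < 1) (hw : ‖w‖ < 1) :
    diskMobius (-c) (diskMobius c w) = w := by
  have hden : 1 - w * conj c ≠ 0 := mul_comm w (conj c) ▸ one_sub_conj_mul_ne_zero hc hw
  have hden' := one_sub_conj_mul_ne_zero (c := -c) (by rwa [norm_neg])
    (norm_diskMobius_lt_one hc hw)
  rw [diskMobius, div_eq_iff hden', diskMobius]
  field_simp
  simp only [map_neg]
  ring

lemma diskMobius_diskMobius_neg (hc : ‖c‖ < 1) (hw : ‖w‖ < 1) :
    diskMobius c (diskMobius (-c) w) = w := by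
  simpa using diskMobius_neg_diskMobius (c := -c) (by simpa using hc) hw

lemma differentiableOn_diskMobius (hc : ‖c‖ < 1) :
    DifferentiableOn ℂ (diskMobius c) (ball 0 1) :=
  (differentiableOn_id.sub_const c).div ((differentiableOn_id.const_mul _).const_sub 1)
    fun _ hw => one_sub_conj_mul_ne_zero hc (mem_ball_zero_iff.mp hw)

end diskMobius

lemma le_of_ball_zero_subset_ball_zero {E : Type*} [NormedAddCommGroup E] [NormedSpace ℝ E]
    [Nontrivial E] {r s : ℝ} (hs : 0 ≤ s) (h : ball (0 : E) r ⊆ ball 0 s) : r ≤ s := by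
  by_contra! hsr
  obtain ⟨v, hv⟩ := exists_norm_eq E hs
  have := h (mem_ball_zero_iff.mpr (hv.trans_lt hsr))
  rw [mem_ball_zero_iff, hv] at this
  exact this.false

lemma le_squeezingFn {ι : Type*} [Fintype ι] [Nonempty ι] {D : Set (EuclideanSpace ℂ ι)}
    {z : EuclideanSpace ℂ ι} {r : ℝ} {f : EuclideanSpace ℂ ι → EuclideanSpace ℂ ι}
    (hr : 0 < r) (hf : DifferentiableOn ℂ f D) (hinj : InjOn f D)
    (hmaps : MapsTo f D (ball 0 1)) (hfz : f z = 0) (hball : ball 0 r ⊆ f '' D) :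
    r ≤ squeezingFn D z := by
  refine le_csSup ⟨1, ?_⟩ ⟨hr, f, hf, hinj, hmaps, hfz, hball⟩
  rintro s ⟨-, g, -, -, hg, -, hs⟩
  exact le_of_ball_zero_subset_ball_zero zero_le_one (hs.trans hg.image_subset)

lemma mem_hartogsTriangle_iff {w : EuclideanSpace ℂ (Fin 2)} :
    w ∈ hartogsTriangle ↔ w 0 ∈ ball (0 : ℂ) 1 \ {0} ∧ w 1 / w 0 ∈ ball (0 : ℂ) 1 \ {0} := by
  simp only [Set.mem_sdiff, mem_ball_zero_iff, mem_singleton_iff, norm_div,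
    ← norm_pos_iff]
  constructor
  · rintro ⟨h1, h10, h0⟩
    have h0pos := h1.trans h10
    exact ⟨⟨h0, h0pos⟩, (div_lt_one h0pos).mpr h10, div_pos h1 h0pos⟩
  · rintro ⟨⟨h0, h0pos⟩, h10, h1⟩
    exact ⟨(div_pos_iff_of_pos_right h0pos).mp h1, (div_lt_one h0pos).mp h10, h0⟩

lemma EuclideanSpace.norm_lt_sqrt_card_mul {𝕜 ι : Type*} [RCLike 𝕜] [Fintype ι] [Nonempty ι]
    {x : EuclideanSpace 𝕜 ι} {r : ℝ} (hx : ∀ i, ‖x i‖ < r) :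
    ‖x‖ < √(Fintype.card ι) * r := by
  have hr : 0 < r := (norm_nonneg _).trans_lt (hx (Classical.arbitrary ι))
  rw [EuclideanSpace.norm_eq, ← Real.sqrt_sq hr.le, ← Real.sqrt_mul (Nat.cast_nonneg _)]
  apply Real.sqrt_lt_sqrt (by positivity)
  calc ∑ i, ‖x i‖ ^ 2 < ∑ _i : ι, r ^ 2 :=
        Finset.sum_lt_sum_of_nonempty Finset.univ_nonempty
          fun i _ => pow_lt_pow_left₀ (hx i) (norm_nonneg _) two_ne_zero
    _ = Fintype.card ι * r ^ 2 := by simp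

lemma diskMobius_neg_mem_ball_sdiff {c v : ℂ} (hc : ‖c‖ < 1) (hv : ‖v‖ < ‖c‖) :
    diskMobius (-c) v ∈ ball (0 : ℂ) 1 \ {0} := by
  have hc' : ‖-c‖ < 1 := by rwa [norm_neg]
  refine ⟨mem_ball_zero_iff.mpr (norm_diskMobius_lt_one hc' (hv.trans hc)), fun h => ?_⟩
  rw [mem_singleton_iff, diskMobius_eq_zero_iff hc' (hv.trans hc)] at h
  rw [h, norm_neg] at hv
  exact hv.false

lemma norm_sqrt_two_smul_apply_lt {ι : Type*} [Fintype ι] {u : EuclideanSpace ℂ ι} {ρ : ℝ}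
    (hu : u ∈ ball 0 (√2 / 2 * ρ)) (i : ι) : ‖(√2 • u) i‖ < ρ := by
  have hsqrt : √2 * (√2 / 2) = 1 := by
    rw [← mul_div_assoc, Real.mul_self_sqrt zero_le_two, div_self two_ne_zero]
  calc ‖(√2 • u) i‖ ≤ ‖√2 • u‖ := PiLp.norm_apply_le _ i
    _ = √2 * ‖u‖ := by rw [norm_smul, Real.norm_of_nonneg (Real.sqrt_nonneg 2)]
    _ < √2 * (√2 / 2 * ρ) := by gcongr; exact mem_ball_zero_iff.mp hu
    _ = ρ := by rw [← mul_assoc, hsqrt, one_mul]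

section hartogsSqueezingMap

variable {z w u : EuclideanSpace ℂ (Fin 2)}

lemma norm_apply_one_lt_norm_div (hz : z ∈ hartogsTriangle) : ‖z 1‖ < ‖z 1 / z 0‖ := by
  obtain ⟨h1, h10, h0⟩ := hz
  rw [norm_div, lt_div_iff₀ (h1.trans h10)]
  exact mul_lt_of_lt_one_right h1 h0

def hartogsSqueezingMap (z w : EuclideanSpace ℂ (Fin 2)) : EuclideanSpace ℂ (Fin 2) :=
  (√2)⁻¹ • !₂[diskMobius (z 0) (w 0), diskMobius (z 1 / z 0) (w 1 / w 0)]

def hartogsSqueezingMapInv (z u : EuclideanSpace ℂ (Fin 2)) : EuclideanSpace ℂ (Fin 2) :=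
  !₂[diskMobius (-z 0) ((√2 • u) 0),
    diskMobius (-z 0) ((√2 • u) 0) * diskMobius (-(z 1 / z 0)) ((√2 • u) 1)]

@[simp]
lemma hartogsSqueezingMap_self : hartogsSqueezingMap z z = 0 := by
  ext i; fin_cases i <;> simp [hartogsSqueezingMap]

lemma mapsTo_hartogsSqueezingMap (hz : z ∈ hartogsTriangle) :
    MapsTo (hartogsSqueezingMap z) hartogsTriangle (ball 0 1) := by
  intro w hw
  obtain ⟨⟨hz0, -⟩, hz1, -⟩ := mem_hartogsTriangle_iff.mp hz
  obtain ⟨⟨hw0, -⟩, hw1, -⟩ := mem_hartogsTriangle_iff.mp hw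
  rw [mem_ball_zero_iff] at hz0 hz1 hw0 hw1 ⊢
  have hpair : ‖(!₂[diskMobius (z 0) (w 0), diskMobius (z 1 / z 0) (w 1 / w 0)] :
      EuclideanSpace ℂ (Fin 2))‖ < √2 * 1 := by
    refine EuclideanSpace.norm_lt_sqrt_card_mul fun i => ?_
    fin_cases i
    · simpa using norm_diskMobius_lt_one hz0 hw0
    · simpa using norm_diskMobius_lt_one hz1 hw1
  rw [hartogsSqueezingMap, norm_smul, norm_inv, Real.norm_of_nonneg (Real.sqrt_nonneg 2)]
  rw [mul_one] at hpair
  exact (inv_mul_lt_one₀ (by positivity)).mpr hpair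

lemma differentiableOn_hartogsSqueezingMap (hz : z ∈ hartogsTriangle) :
    DifferentiableOn ℂ (hartogsSqueezingMap z) hartogsTriangle := by
  obtain ⟨⟨hz0, -⟩, hz1, -⟩ := mem_hartogsTriangle_iff.mp hz
  have hcoord (i : Fin 2) : Differentiable ℂ fun w : EuclideanSpace ℂ (Fin 2) => w i :=
    differentiable_euclidean.mp differentiable_id i
  have hdiv : DifferentiableOn ℂ (fun w : EuclideanSpace ℂ (Fin 2) => w 1 / w 0)
      hartogsTriangle := by
    simp only [div_eq_mul_inv]
    exact (hcoord 1).differentiableOn.mul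
      ((hcoord 0).differentiableOn.inv fun w hw => (mem_hartogsTriangle_iff.mp hw).1.2)
  have hpair : DifferentiableOn ℂ (fun w : EuclideanSpace ℂ (Fin 2) =>
      !₂[diskMobius (z 0) (w 0), diskMobius (z 1 / z 0) (w 1 / w 0)]) hartogsTriangle := by
    refine differentiableOn_euclidean.mpr fun i => ?_
    fin_cases i
    · exact (differentiableOn_diskMobius (mem_ball_zero_iff.mp hz0)).comp
        (hcoord 0).differentiableOn fun w hw => (mem_hartogsTriangle_iff.mp hw).1.1
    · exact (differentiableOn_diskMobius (mem_ball_zero_iff.mp hz1)).comp hdiv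
        fun w hw => (mem_hartogsTriangle_iff.mp hw).2.1
  exact hpair.const_smul (√2)⁻¹

lemma leftInvOn_hartogsSqueezingMapInv (hz : z ∈ hartogsTriangle) :
    LeftInvOn (hartogsSqueezingMapInv z) (hartogsSqueezingMap z) hartogsTriangle := by
  intro w hw
  obtain ⟨⟨hz0, -⟩, hz1, -⟩ := mem_hartogsTriangle_iff.mp hz
  obtain ⟨⟨hw0, hw0_ne⟩, hw1, -⟩ := mem_hartogsTriangle_iff.mp hw
  rw [mem_ball_zero_iff] at hz0 hz1 hw0 hw1
  have hscale : √2 • hartogsSqueezingMap z w =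
      !₂[diskMobius (z 0) (w 0), diskMobius (z 1 / z 0) (w 1 / w 0)] :=
    smul_inv_smul₀ (by positivity) _
  ext i
  fin_cases i
  · simp [hartogsSqueezingMapInv, hscale, diskMobius_neg_diskMobius hz0 hw0]
  · simp [hartogsSqueezingMapInv, hscale, diskMobius_neg_diskMobius hz0 hw0,
      diskMobius_neg_diskMobius hz1 hw1, mul_div_cancel₀ _ hw0_ne]

lemma mapsTo_hartogsSqueezingMapInv (hz : z ∈ hartogsTriangle) :
    MapsTo (hartogsSqueezingMapInv z) (ball 0 (√2 / 2 * ‖z 1‖)) hartogsTriangle := by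
  intro u hu
  obtain ⟨⟨hz0, -⟩, hz1, -⟩ := mem_hartogsTriangle_iff.mp hz
  rw [mem_ball_zero_iff] at hz0 hz1
  have hw0 := diskMobius_neg_mem_ball_sdiff hz0
    ((norm_sqrt_two_smul_apply_lt hu 0).trans hz.2.1)
  have hβ := diskMobius_neg_mem_ball_sdiff hz1
    ((norm_sqrt_two_smul_apply_lt hu 1).trans (norm_apply_one_lt_norm_div hz))
  refine mem_hartogsTriangle_iff.mpr ⟨hw0, ?_⟩
  convert hβ using 1
  exact mul_div_cancel_left₀ _ hw0.2

lemma rightInvOn_hartogsSqueezingMapInv (hz : z ∈ hartogsTriangle) :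
    RightInvOn (hartogsSqueezingMapInv z) (hartogsSqueezingMap z)
      (ball 0 (√2 / 2 * ‖z 1‖)) := by
  intro u hu
  obtain ⟨⟨hz0, -⟩, hz1, -⟩ := mem_hartogsTriangle_iff.mp hz
  rw [mem_ball_zero_iff] at hz0 hz1
  have hw0_ne := (mem_hartogsTriangle_iff.mp (mapsTo_hartogsSqueezingMapInv hz hu)).1.2
  have hp (i : Fin 2) : ‖(√2 • u) i‖ < 1 :=
    (norm_sqrt_two_smul_apply_lt hu i).trans (hz.2.1.trans hz.2.2)
  have hscale : !₂[(√2 • u) 0, (√2 • u) 1] = √2 • u := by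
    ext i; fin_cases i <;> rfl
  have h0 : diskMobius (z 0) (hartogsSqueezingMapInv z u 0) = (√2 • u) 0 :=
    diskMobius_diskMobius_neg hz0 (hp 0)
  have h1 : diskMobius (z 1 / z 0)
      (hartogsSqueezingMapInv z u 1 / hartogsSqueezingMapInv z u 0) = (√2 • u) 1 := by
    rw [show hartogsSqueezingMapInv z u 1 / hartogsSqueezingMapInv z u 0 = _ from
      mul_div_cancel_left₀ _ hw0_ne]
    exact diskMobius_diskMobius_neg hz1 (hp 1)
  rw [hartogsSqueezingMap, h0, h1, hscale, inv_smul_smul₀ (by positivity)]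

end hartogsSqueezingMap

lemma sqrt_two_div_two_mul_norm_le_squeezingFn_hartogsTriangle
    {z : EuclideanSpace ℂ (Fin 2)} (hz : z ∈ hartogsTriangle) :
    √2 / 2 * ‖z 1‖ ≤ squeezingFn hartogsTriangle z :=
  le_squeezingFn (by have := hz.1; positivity) (differentiableOn_hartogsSqueezingMap hz)
    (leftInvOn_hartogsSqueezingMapInv hz).injOn (mapsTo_hartogsSqueezingMap hz)
    hartogsSqueezingMap_self
    ((rightInvOn_hartogsSqueezingMapInv hz).surjOn (mapsTo_hartogsSqueezingMapInv hz))

theorem squeezingFn_hartogsTriangle_lower_bound_general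
    (a : ℝ) (zseq : ℕ → EuclideanSpace ℂ (Fin 2))
    (hmem : ∀ j, zseq j ∈ hartogsTriangle)
    (hlow : ∀ j, a < ‖zseq j 1‖) :
    ∀ j, Real.sqrt 2 / 2 * a ≤ squeezingFn hartogsTriangle (zseq j) := fun j =>
  (mul_le_mul_of_nonneg_left (hlow j).le (by positivity)).trans
    (sqrt_two_div_two_mul_norm_le_squeezingFn_hartogsTriangle (hmem j))

/-- Let `D` be the Hartogs triangle. If `z^j ∈ D` is a sequence with
`|z₁^j| ≤ (1 + 1/j)|z₂^j|` and `|z₂^j| > a > 0` for all `j`, then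
`s_D(z^j) ≥ (√2/2)·a` for all `j`. -/
theorem squeezingFn_hartogsTriangle_lower_bound
    (a : ℝ) (ha : 0 < a) (zseq : ℕ → EuclideanSpace ℂ (Fin 2))
    (hmem : ∀ j, zseq j ∈ hartogsTriangle)
    (hratio : ∀ j : ℕ, 1 ≤ j →
      ‖zseq j 0‖ ≤ (1 + 1 / (j : ℝ)) * ‖zseq j 1‖)
    (hlow : ∀ j, a < ‖zseq j 1‖) :
    ∀ j, Real.sqrt 2 / 2 * a ≤ squeezingFn hartogsTriangle (zseq j) :=
  squeezingFn_hartogsTriangle_lower_bound_general a zseq hmem hlow
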